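/- A non-negative square matrix F has all its basic components (strongly connected components of maximal spectral radius) coinciding with its final components (components with no access to other components) if and only if F admits a positive right eigenvector for its spectral radius. -/

import Mathlib

open scoped Classical ENNReal

namespace Umbrella

variable {n : Type*} [Fintype n] [DecidableEq n]

/-- Reachability in the digraph of nonzero entries of `F`. -/
def Reach (F : Matrix n n ℝ) (i j : n) : Prop :=
  Relation.ReflTransGen (fun a b => F a b ≠ 0) i j

/-- `i` and `j` lie in the same strongly connected component. -/
def SameComp (F : Matrix n n ℝ) (i j : n) : Prop := Reach F i j ∧ Reach F j i

/-- The spectral radius of a matrix. -/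
noncomputable def sr (F : Matrix n n ℝ) : ℝ≥0∞ := spectralRadius ℝ F

/-- The principal submatrix corresponding to the component of `i`. -/
noncomputable def compMatrix (F : Matrix n n ℝ) (i : n) :
    Matrix {j // SameComp F i j} {j // SameComp F i j} ℝ :=
  F.submatrix Subtype.val Subtype.val

/-- The component of `i` is basic: maximal spectral radius. -/
def IsBasic (F : Matrix n n ℝ) (i : n) : Prop := sr (compMatrix F i) = sr F

/-- The component of `i` is final: no access to any other component. -/
def IsFinal (F : Matrix n n ℝ) (i : n) : Prop := ∀ j, Reach F i j → Reach F j i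

end Umbrella

/-!
Irreducible nonnegative blocks `B` have a positive eigenvector for their spectral radius
`ρ(B)` (the maximum of the Collatz–Wielandt function), and a positive `v` with `B v ≤ r v`
forces `ρ(B) ≤ r`, strictly if one of the inequalities is strict. Given `F v = ρ(F) v` with
`v > 0`, restricting to a class gives `B v ≤ ρ(F) v`, with equality exactly when no edge leaves
the class; so the final classes are exactly the basic ones.

Conversely, an eigenvector is built class by class, downstream classes first: on a final class
one takes its Perron vector, on any other class `ρ(B) < ρ(F)` and `(ρ(F) - B) w = c` has a
nonnegative solution for the nonnegative inflow `c`. The same construction, run on the classes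
upstream of a class of maximal radius among them, yields a real eigenvalue of `F` showing
`ρ(B) ≤ ρ(F)` for every class.
-/

open Matrix

namespace Umbrella

section Ratio

variable {m : Type*} [Fintype m] [Nonempty m] {u : m → ℝ}

theorem exists_smul_le_of_pos (hu : ∀ i, 0 < u i) (w : m → ℝ) :
    ∃ t, t • u ≤ w ∧ ∃ i, w i = t * u i := by
  obtain ⟨i, -, hi⟩ :=
    Finset.exists_min_image Finset.univ (fun i => w i / u i) Finset.univ_nonempty
  refine ⟨w i / u i, fun j => ?_, i, (div_mul_cancel₀ _ (hu i).ne').symm⟩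
  rw [Pi.smul_apply, smul_eq_mul, ← le_div_iff₀ (hu j)]
  exact hi j (Finset.mem_univ j)

theorem exists_le_smul_of_pos (hu : ∀ i, 0 < u i) (w : m → ℝ) :
    ∃ t, w ≤ t • u ∧ ∃ i, w i = t * u i := by
  obtain ⟨t, ht, i, hi⟩ := exists_smul_le_of_pos hu (-w)
  refine ⟨-t, fun j => ?_, i, by simp only [Pi.neg_apply] at hi; linarith⟩
  have := ht j
  simp only [Pi.smul_apply, smul_eq_mul, Pi.neg_apply] at this ⊢
  linarith

end Ratio

section NonnegMatrix

variable {m : Type*} [Fintype m] {B : Matrix m m ℝ}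

theorem mulVec_mono_of_nonneg (hB : ∀ i j, 0 ≤ B i j) {x y : m → ℝ} (hxy : x ≤ y) :
    B *ᵥ x ≤ B *ᵥ y := fun i =>
  Finset.sum_le_sum fun j _ => mul_le_mul_of_nonneg_left (hxy j) (hB i j)

theorem mulVec_nonneg_of_nonneg (hB : ∀ i j, 0 ≤ B i j) {x : m → ℝ} (hx : 0 ≤ x) :
    0 ≤ B *ᵥ x := by
  simpa using mulVec_mono_of_nonneg hB hx

theorem eq_zero_of_reach (hB : ∀ i j, 0 ≤ B i j) {w : m → ℝ} (hw : 0 ≤ w)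
    (hBw : ∀ i, w i = 0 → (B *ᵥ w) i ≤ 0) {i j : m} (hij : Reach B i j) (hi : w i = 0) :
    w j = 0 := by
  induction hij with
  | refl => exact hi
  | @tail b c _ hbc ih =>
    have hsum : ∑ k, B b k * w k = 0 :=
      le_antisymm (hBw b ih) (mulVec_nonneg_of_nonneg hB hw b)
    have := (Finset.sum_eq_zero_iff_of_nonneg fun k _ => mul_nonneg (hB b k) (hw k)).1 hsum c
      (Finset.mem_univ c)
    exact (mul_eq_zero.1 this).resolve_left hbc

variable [DecidableEq m]

theorem pow_apply_nonneg (hB : ∀ i j, 0 ≤ B i j) (k : ℕ) (i j : m) : 0 ≤ (B ^ k) i j := by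
  induction k generalizing i j with
  | zero => by_cases h : i = j <;> simp [one_apply, h]
  | succ k ih => rw [pow_succ]; exact Finset.sum_nonneg fun l _ => mul_nonneg (ih i l) (hB l j)

theorem sr_ne_top (B : Matrix m m ℝ) : sr B ≠ ⊤ := by
  have := (Matrix.finite_spectrum B).to_subtype
  rw [sr, spectralRadius, iSup_subtype']
  exact iSup_ne_top fun _ => ENNReal.coe_ne_top

theorem mem_spectrum_iff_exists_mulVec_eq_smul {r : ℝ} :
    r ∈ spectrum ℝ B ↔ ∃ x ≠ 0, B *ᵥ x = r • x := by
  rw [spectrum.mem_iff, isUnit_iff_isUnit_det, isUnit_iff_ne_zero, not_not,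
    ← exists_mulVec_eq_zero_iff]
  simp [Algebra.algebraMap_eq_smul_one, sub_mulVec, smul_mulVec, sub_eq_zero, eq_comm]

theorem exists_mulVec_add_eq_smul {r : ℝ} (hr : r ∉ spectrum ℝ B) (c : m → ℝ) :
    ∃ w, B *ᵥ w + c = r • w := by
  obtain ⟨w, hw⟩ := mulVec_surjective_iff_isUnit.2 (spectrum.notMem_iff.1 hr) c
  refine ⟨w, ?_⟩
  simp [← hw, Algebra.algebraMap_eq_smul_one, sub_mulVec, smul_mulVec]

theorem abs_le_toReal_sr {r : ℝ} (hr : r ∈ spectrum ℝ B) : |r| ≤ (sr B).toReal := by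
  rw [← ENNReal.ofReal_le_iff_le_toReal (sr_ne_top B), ← Real.enorm_eq_ofReal_abs,
    enorm_eq_nnnorm]
  exact le_iSup₂ (f := fun k (_ : k ∈ spectrum ℝ B) => (‖k‖₊ : ℝ≥0∞)) r hr

theorem sr_le_ofReal_of_mulVec_le (hB : ∀ i j, 0 ≤ B i j) {v : m → ℝ} (hv : ∀ i, 0 < v i)
    {r : ℝ} (hBv : B *ᵥ v ≤ r • v) : sr B ≤ ENNReal.ofReal r := by
  refine iSup₂_le fun t ht => ?_
  obtain ⟨x, hx0, hx⟩ := mem_spectrum_iff_exists_mulVec_eq_smul.1 ht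
  obtain ⟨i, hi⟩ := Function.ne_iff.1 hx0
  have : Nonempty m := ⟨i⟩
  obtain ⟨c, hc, j, hj⟩ := exists_le_smul_of_pos hv fun k => |x k|
  have hc0 : 0 < c := pos_of_mul_pos_left ((abs_pos.2 hi).trans_le (hc i)) (hv i).le
  have hxj : 0 < |x j| := hj ▸ mul_pos hc0 (hv j)
  have key : |t| * |x j| ≤ r * |x j| := calc
    |t| * |x j| = |(B *ᵥ x) j| := by rw [hx, Pi.smul_apply, smul_eq_mul, abs_mul]
    _ ≤ (B *ᵥ fun k => |x k|) j := (Finset.abs_sum_le_sum_abs _ _).trans_eq <|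
        Finset.sum_congr rfl fun k _ => by rw [abs_mul, abs_of_nonneg (hB j k)]
    _ ≤ (B *ᵥ (c • v)) j := mulVec_mono_of_nonneg hB hc j
    _ ≤ c * (r * v j) := by
        rw [mulVec_smul, Pi.smul_apply, smul_eq_mul]
        exact mul_le_mul_of_nonneg_left (hBv j) hc0.le
    _ = r * |x j| := by rw [hj]; ring
  rw [← enorm_eq_nnnorm, Real.enorm_eq_ofReal_abs]
  exact ENNReal.ofReal_le_ofReal (le_of_mul_le_mul_right key hxj)

theorem toReal_sr_eq_of_mulVec_eq_smul [Nonempty m] (hB : ∀ i j, 0 ≤ B i j) {v : m → ℝ}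
    (hv : ∀ i, 0 < v i) {r : ℝ} (hBv : B *ᵥ v = r • v) : (sr B).toReal = r := by
  have i := Classical.arbitrary m
  have hr : 0 ≤ r := by
    have : 0 ≤ r * v i := by
      simpa [hBv] using mulVec_nonneg_of_nonneg hB (fun k => (hv k).le) i
    exact nonneg_of_mul_nonneg_left this (hv i)
  refine le_antisymm ?_ ?_
  · exact ENNReal.toReal_le_of_le_ofReal hr (sr_le_ofReal_of_mulVec_le hB hv hBv.le)
  · have hspec : r ∈ spectrum ℝ B :=
      mem_spectrum_iff_exists_mulVec_eq_smul.2 ⟨v, fun h => (hv i).ne' (congrFun h i), hBv⟩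
    exact (le_abs_self r).trans (abs_le_toReal_sr hspec)

end NonnegMatrix

section Perron

variable {m : Type*} [Fintype m] {B : Matrix m m ℝ}

theorem mulVec_apply_pos_of_pos {P : Matrix m m ℝ} (hP : ∀ i j, 0 < P i j) {z : m → ℝ}
    (hz : 0 ≤ z) (hz0 : z ≠ 0) (i : m) : 0 < (P *ᵥ z) i := by
  obtain ⟨j, hj⟩ := Function.ne_iff.1 hz0
  exact (mul_pos (hP i j) ((hz j).lt_of_ne' hj)).trans_le <| Finset.single_le_sum
    (fun k _ => mul_nonneg (hP i k).le (hz k)) (Finset.mem_univ j)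

/-- The Perron root of an irreducible `B` is the largest `t` occurring here. -/
def collatzWielandtSet (B : Matrix m m ℝ) : Set (ℝ × (m → ℝ)) :=
  {p | p.2 ∈ stdSimplex ℝ m ∧ 0 ≤ p.1 ∧ p.1 • p.2 ≤ B *ᵥ p.2}

theorem le_sum_of_mem_collatzWielandtSet (hB : ∀ i j, 0 ≤ B i j) {p : ℝ × (m → ℝ)}
    (hp : p ∈ collatzWielandtSet B) : p.1 ≤ ∑ i, ∑ j, B i j := by
  obtain ⟨hx, -, hle⟩ := hp
  calc p.1 = ∑ i, p.1 * p.2 i := by rw [← Finset.mul_sum, hx.2, mul_one]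
    _ ≤ ∑ i, (B *ᵥ p.2) i := Finset.sum_le_sum fun i _ => hle i
    _ ≤ ∑ i, ∑ j, B i j := Finset.sum_le_sum fun i _ => Finset.sum_le_sum fun j _ =>
        mul_le_of_le_one_right (hB i j) (mem_Icc_of_mem_stdSimplex hx j).2

theorem isCompact_collatzWielandtSet (hB : ∀ i j, 0 ≤ B i j) :
    IsCompact (collatzWielandtSet B) := by
  refine (isCompact_Icc.prod (isCompact_stdSimplex ℝ m)).of_isClosed_subset ?_
    fun p hp => ⟨⟨hp.2.1, le_sum_of_mem_collatzWielandtSet hB hp⟩, hp.1⟩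
  exact ((isClosed_stdSimplex ℝ m).preimage continuous_snd).inter
    ((isClosed_le continuous_const continuous_fst).inter (isClosed_le
      (continuous_fst.smul continuous_snd) (continuous_const.matrix_mulVec continuous_snd)))

/-- Otherwise multiplying by a positive matrix commuting with `B` makes the defect
`B *ᵥ x - t • x` strictly positive, and `t` can be raised. -/
theorem mulVec_eq_smul_of_isMaxOn {P : Matrix m m ℝ} (hP : ∀ i j, 0 < P i j)
    (hBP : Commute B P) {p : ℝ × (m → ℝ)} (hp : p ∈ collatzWielandtSet B)
    (hmax : IsMaxOn Prod.fst (collatzWielandtSet B) p) :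
    B *ᵥ p.2 = p.1 • p.2 := by
  obtain ⟨t, x⟩ := p
  obtain ⟨hx, ht, hle⟩ := hp
  by_contra hne
  have hx0 : x ≠ 0 := by rintro rfl; simp [stdSimplex] at hx
  obtain ⟨i₀, -⟩ := Function.ne_iff.1 hx0
  have : Nonempty m := ⟨i₀⟩
  set y := P *ᵥ x
  have hy : ∀ i, 0 < y i := mulVec_apply_pos_of_pos hP hx.1 hx0
  have hPw : ∀ i, 0 < (P *ᵥ (B *ᵥ x - t • x)) i :=
    mulVec_apply_pos_of_pos hP (sub_nonneg.2 hle) (sub_ne_zero.2 hne)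
  have hBy : B *ᵥ y = t • y + P *ᵥ (B *ᵥ x - t • x) := by
    simp only [y, mulVec_mulVec, hBP.eq, mulVec_sub, mulVec_smul]
    abel
  obtain ⟨ε, hε, i, hi⟩ := exists_smul_le_of_pos hy (P *ᵥ (B *ᵥ x - t • x))
  have hε0 : 0 < ε := pos_of_mul_pos_left (hi ▸ hPw i) (hy i).le
  set s := ∑ i, y i
  have hs : 0 < s := Finset.sum_pos (fun i _ => hy i) Finset.univ_nonempty
  have hmem : (t + ε, s⁻¹ • y) ∈ collatzWielandtSet B := by
    refine ⟨⟨fun i => mul_nonneg (inv_nonneg.2 hs.le) (hy i).le, ?_⟩, add_nonneg ht hε0.le, ?_⟩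
    · simp [← Finset.mul_sum, s, inv_mul_cancel₀ hs.ne']
    · rw [smul_comm, mulVec_smul, hBy, add_smul]
      exact smul_le_smul_of_nonneg_left ((add_le_add_iff_left _).2 hε) (inv_nonneg.2 hs.le)
  have : t + ε ≤ t := hmax hmem
  linarith

variable [DecidableEq m]

def IsIrreducible (B : Matrix m m ℝ) : Prop := ∀ i j, Reach B i j

theorem exists_pow_apply_pos_of_reach (hB : ∀ i j, 0 ≤ B i j) {i j : m} (h : Reach B i j) :
    ∃ k, 0 < (B ^ k) i j := by
  induction h using Relation.ReflTransGen.head_induction_on with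
  | refl => exact ⟨0, by simp⟩
  | @head a b hab _ ih =>
    obtain ⟨k, hk⟩ := ih
    refine ⟨k + 1, ?_⟩
    rw [pow_succ', mul_apply]
    exact (mul_pos ((hB a b).lt_of_ne' hab) hk).trans_le <| Finset.single_le_sum
      (fun l _ => mul_nonneg (hB a l) (pow_apply_nonneg hB k l j)) (Finset.mem_univ b)

theorem IsIrreducible.exists_pos_commute (hB : ∀ i j, 0 ≤ B i j) (hirr : IsIrreducible B) :
    ∃ P : Matrix m m ℝ, (∀ i j, 0 < P i j) ∧ Commute B P := by
  choose k hk using fun p : m × m => exists_pow_apply_pos_of_reach hB (hirr p.1 p.2)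
  refine ⟨∑ p, B ^ k p, fun i j => ?_,
    Commute.sum_right _ _ _ fun p _ => .pow_right (.refl B) _⟩
  rw [Matrix.sum_apply]
  exact (hk (i, j)).trans_le <| Finset.single_le_sum
    (fun p _ => pow_apply_nonneg hB (k p) i j) (Finset.mem_univ (i, j))

theorem IsIrreducible.exists_pos_mulVec_eq_toReal_sr_smul [Nonempty m]
    (hB : ∀ i j, 0 ≤ B i j) (hirr : IsIrreducible B) :
    ∃ u : m → ℝ, (∀ i, 0 < u i) ∧ B *ᵥ u = (sr B).toReal • u := by
  obtain ⟨P, hP, hBP⟩ := hirr.exists_pos_commute hB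
  have hne : (collatzWielandtSet B).Nonempty :=
    ⟨(0, Pi.single (Classical.arbitrary m) 1), single_mem_stdSimplex ℝ _, le_rfl,
      by simpa using mulVec_nonneg_of_nonneg hB (single_mem_stdSimplex ℝ _).1⟩
  obtain ⟨p, hp, hmax⟩ :=
    (isCompact_collatzWielandtSet hB).exists_isMaxOn hne continuous_fst.continuousOn
  have hx0 : p.2 ≠ 0 := by intro h; have := hp.1.2; simp [h] at this
  have hu : ∀ i, 0 < (P *ᵥ p.2) i := mulVec_apply_pos_of_pos hP hp.1.1 hx0
  have hBu : B *ᵥ (P *ᵥ p.2) = p.1 • (P *ᵥ p.2) := by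
    rw [mulVec_mulVec, hBP.eq, ← mulVec_mulVec, mulVec_eq_smul_of_isMaxOn hP hBP hp hmax,
      mulVec_smul]
  exact ⟨_, hu, by rw [toReal_sr_eq_of_mulVec_eq_smul hB hu hBu, hBu]⟩

end Perron

section Irreducible

variable {m : Type*} [Fintype m] [DecidableEq m] [Nonempty m] {B : Matrix m m ℝ}

theorem IsIrreducible.exists_nonneg_mulVec_add_eq_smul (hB : ∀ i j, 0 ≤ B i j)
    (hirr : IsIrreducible B) {r : ℝ} (hr : (sr B).toReal < r) {c : m → ℝ} (hc : 0 ≤ c) :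
    ∃ w, 0 ≤ w ∧ B *ᵥ w + c = r • w := by
  obtain ⟨u, hu, hBu⟩ := hirr.exists_pos_mulVec_eq_toReal_sr_smul hB
  have hspec : r ∉ spectrum ℝ B := fun h =>
    ((le_abs_self r).trans (abs_le_toReal_sr h)).not_gt hr
  obtain ⟨w, hw⟩ := exists_mulVec_add_eq_smul hspec c
  refine ⟨w, ?_, hw⟩
  obtain ⟨t, ht, i, hi⟩ := exists_smul_le_of_pos hu w
  suffices 0 ≤ t from fun j => (mul_nonneg this (hu j).le).trans (ht j)
  by_contra! ht0
  -- at the minimising coordinate, `r * w i ≥ (B *ᵥ w) i ≥ t * ρ * u i`, forcing `r ≤ ρ`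
  have key : t * ((sr B).toReal * u i) ≤ r * (t * u i) := calc
    t * ((sr B).toReal * u i) = (B *ᵥ (t • u)) i := by simp [mulVec_smul, hBu]
    _ ≤ (B *ᵥ w) i := mulVec_mono_of_nonneg hB ht i
    _ ≤ (B *ᵥ w + c) i := le_add_of_nonneg_right (hc i)
    _ = r * (t * u i) := by rw [hw, Pi.smul_apply, smul_eq_mul, hi]
  nlinarith [mul_neg_of_neg_of_pos ht0 (hu i)]

theorem IsIrreducible.toReal_sr_lt (hB : ∀ i j, 0 ≤ B i j) (hirr : IsIrreducible B)
    {v : m → ℝ} (hv : ∀ i, 0 < v i) {r : ℝ} (hle : B *ᵥ v ≤ r • v) {a : m}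
    (ha : (B *ᵥ v) a < r * v a) : (sr B).toReal < r := by
  obtain ⟨u, hu, hBu⟩ := hirr.exists_pos_mulVec_eq_toReal_sr_smul hB
  set ρ := (sr B).toReal
  by_contra! hrρ
  obtain ⟨t, ht, i, hi⟩ := exists_smul_le_of_pos hu v
  have ht0 : 0 ≤ t := (pos_of_mul_pos_left (hi ▸ hv i) (hu i).le).le
  -- `v - t • u` is a nonnegative subsolution vanishing at `i`, hence zero
  have hsub : B *ᵥ (v - t • u) ≤ r • (v - t • u) := fun k => by
    have := hle k
    have : r * (t * u k) ≤ ρ * (t * u k) :=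
      mul_le_mul_of_nonneg_right hrρ (mul_nonneg ht0 (hu k).le)
    simp only [mulVec_sub, mulVec_smul, hBu, Pi.sub_apply, Pi.smul_apply, smul_eq_mul] at *
    nlinarith
  have hzero : v - t • u = 0 := funext fun k =>
    eq_zero_of_reach hB (sub_nonneg.2 ht) (fun j hj => by simpa [hj] using hsub j) (hirr i k)
      (by simp [hi])
  have hBv : (B *ᵥ v) a = ρ * v a := by
    rw [sub_eq_zero.1 hzero, mulVec_smul, hBu]; simp only [Pi.smul_apply, smul_eq_mul]; ring
  nlinarith [hv a]

end Irreducible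

section Components

theorem extend_subtype_val_apply_of_not {α β : Type*} {p : α → Prop} (w : Subtype p → β)
    (x : α → β) {a : α} (ha : ¬p a) : Function.extend Subtype.val w x a = x a :=
  Function.extend_apply' _ _ _ fun ⟨b, hb⟩ => ha (hb ▸ b.2)

variable {n : Type*} {F : Matrix n n ℝ} {i j k : n}

theorem sameComp_refl (F : Matrix n n ℝ) (i : n) : SameComp F i i := ⟨.refl, .refl⟩

theorem SameComp.symm (h : SameComp F i j) : SameComp F j i := ⟨h.2, h.1⟩

theorem SameComp.trans (hij : SameComp F i j) (hjk : SameComp F j k) : SameComp F i k :=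
  ⟨hij.1.trans hjk.1, hjk.2.trans hij.2⟩

theorem exists_exit_of_not_isFinal (h : ¬IsFinal F i) :
    ∃ a b, SameComp F i a ∧ F a b ≠ 0 ∧ ¬SameComp F i b := by
  simp only [IsFinal, not_forall] at h
  obtain ⟨k, hik, hki⟩ := h
  induction hik with
  | refl => exact absurd .refl hki
  | @tail c k hic hck ih =>
    by_cases hc : SameComp F i c
    · exact ⟨c, k, hc, hck, fun hk => hki hk.2⟩
    · exact ih fun hci => hc ⟨hic, hci⟩

theorem exists_mem_forall_reach_imp (F : Matrix n n ℝ) {D : Finset n} (hD : D.Nonempty) :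
    ∃ i ∈ D, ∀ j ∈ D, Reach F j i → Reach F i j := by
  obtain ⟨i, hi, hmin⟩ := D.exists_minimalFor (fun i => {k | Reach F k i}) hD
  exact ⟨i, hi, fun j hj hji => hmin hj (fun k hk => hk.trans hji) .refl⟩

theorem compMatrix_nonneg (hF : ∀ i j, 0 ≤ F i j) (i : n) : ∀ a b, 0 ≤ compMatrix F i a b :=
  fun a b => hF a b

theorem isIrreducible_compMatrix (F : Matrix n n ℝ) (i : n) : IsIrreducible (compMatrix F i) := by
  rintro ⟨a, ha⟩ ⟨b, hb⟩
  suffices ∀ a, Reach F a b → ∀ ha : SameComp F i a,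
      Reach (compMatrix F i) ⟨a, ha⟩ ⟨b, hb⟩ from
    this a (ha.2.trans hb.1) ha
  intro a hab
  induction hab using Relation.ReflTransGen.head_induction_on with
  | refl => exact fun _ => .refl
  | @head a c hac hcb ih =>
    intro ha
    have hc : SameComp F i c := ⟨ha.1.tail hac, hcb.trans hb.2⟩
    exact .head (show compMatrix F i ⟨a, ha⟩ ⟨c, hc⟩ ≠ 0 from hac) (ih hc)

variable [Fintype n]

theorem exists_reach_isFinal (F : Matrix n n ℝ) (i : n) : ∃ j, Reach F i j ∧ IsFinal F j := by
  obtain ⟨j, hj, hmin⟩ := (Finset.univ.filter (Reach F i)).exists_minimalFor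
    (fun j => {k | Reach F j k}) ⟨i, Finset.mem_filter.2 ⟨Finset.mem_univ i, .refl⟩⟩
  have hij := (Finset.mem_filter.1 hj).2
  exact ⟨j, hij, fun k hjk =>
    hmin (Finset.mem_filter.2 ⟨Finset.mem_univ k, hij.trans hjk⟩) (fun l hl => hjk.trans hl)
      .refl⟩

theorem mulVec_apply_eq_compMatrix_mulVec_add (x : n → ℝ) (a : {k // SameComp F i k}) :
    (F *ᵥ x) a = (compMatrix F i *ᵥ (x ∘ Subtype.val)) a +
      ∑ k : {k // ¬SameComp F i k}, F a k * x k := by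
  rw [mulVec, dotProduct, ← Fintype.sum_subtype_add_sum_subtype (SameComp F i)]
  rfl

theorem mulVec_extend_apply_of_sameComp (w : {k // SameComp F i k} → ℝ) (x : n → ℝ)
    (a : {k // SameComp F i k}) :
    (F *ᵥ Function.extend Subtype.val w x) a =
      (compMatrix F i *ᵥ w) a + ∑ k : {k // ¬SameComp F i k}, F a k * x k := by
  rw [mulVec_apply_eq_compMatrix_mulVec_add, Function.extend_comp Subtype.val_injective]
  congr 1
  exact Finset.sum_congr rfl fun k _ => by rw [extend_subtype_val_apply_of_not _ _ k.2]

theorem mulVec_extend_apply_of_forall_eq_zero (w : {k // SameComp F i k} → ℝ) (x : n → ℝ)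
    (hj : ∀ k, SameComp F i k → F j k = 0) :
    (F *ᵥ Function.extend Subtype.val w x) j = (F *ᵥ x) j := by
  refine Finset.sum_congr rfl fun k _ => ?_
  by_cases hk : SameComp F i k
  · simp [hj k hk]
  · rw [extend_subtype_val_apply_of_not _ _ hk]

variable [DecidableEq n]

theorem sr_compMatrix_eq (h : SameComp F i j) : sr (compMatrix F i) = sr (compMatrix F j) := by
  let e : {k // SameComp F i k} ≃ {k // SameComp F j k} :=
    Equiv.subtypeEquivRight fun k => ⟨h.symm.trans, h.trans⟩
  have : compMatrix F i = reindexAlgEquiv ℝ ℝ e.symm (compMatrix F j) := rfl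
  rw [sr, sr, spectralRadius, spectralRadius, this, AlgEquiv.spectrum_eq]

end Components

section Construction

variable {n : Type*} [Fintype n] [DecidableEq n] {F : Matrix n n ℝ}

theorem exists_nonneg_compMatrix_mulVec_add_eq_smul (hF : ∀ i j, 0 ≤ F i j) {i : n} {r : ℝ}
    {c : {k // SameComp F i k} → ℝ} (hc : 0 ≤ c)
    (h : (sr (compMatrix F i)).toReal < r ∨ (sr (compMatrix F i)).toReal = r ∧ c = 0) :
    ∃ w, 0 ≤ w ∧ compMatrix F i *ᵥ w + c = r • w ∧
      ((sr (compMatrix F i)).toReal = r → ∀ a, 0 < w a) := by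
  have : Nonempty {k // SameComp F i k} := ⟨⟨i, sameComp_refl F i⟩⟩
  have hB := compMatrix_nonneg hF i
  rcases h with hlt | ⟨heq, rfl⟩
  · obtain ⟨w, hw0, hw⟩ :=
      (isIrreducible_compMatrix F i).exists_nonneg_mulVec_add_eq_smul hB hlt hc
    exact ⟨w, hw0, hw, fun h => absurd h hlt.ne⟩
  · obtain ⟨u, hu, hBu⟩ :=
      (isIrreducible_compMatrix F i).exists_pos_mulVec_eq_toReal_sr_smul hB
    exact ⟨u, fun a => (hu a).le, by rw [add_zero, hBu, heq], fun _ => hu⟩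

/-- The class `C` of `i` peeled off is reached from no other class of `D`, so `x` is first
built on `D \ C`; on `C` one then solves `compMatrix F i *ᵥ w + c = r • w`, where `c ≥ 0` is
the flow from `C` into `D \ C`. -/
theorem exists_nonneg_mulVec_eq_smul_on (hF : ∀ i j, 0 ≤ F i j) (r : ℝ) (D : Finset n)
    (hD : ∀ i ∈ D, ∀ j, SameComp F i j → j ∈ D)
    (hsr : ∀ i ∈ D, (sr (compMatrix F i)).toReal < r ∨
      (sr (compMatrix F i)).toReal = r ∧ ∀ j ∈ D, Reach F i j → Reach F j i) :
    ∃ x : n → ℝ, 0 ≤ x ∧ (∀ k ∉ D, x k = 0) ∧ (∀ j ∈ D, (F *ᵥ x) j = r * x j) ∧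
      ∀ k ∈ D, (sr (compMatrix F k)).toReal = r → 0 < x k := by
  induction D using Finset.strongInduction with
  | H D ih =>
  rcases D.eq_empty_or_nonempty with rfl | hne
  · exact ⟨0, le_rfl, fun _ _ => rfl, by simp, by simp⟩
  obtain ⟨i, hi, hsrc⟩ := exists_mem_forall_reach_imp F hne
  set C := Finset.univ.filter (SameComp F i)
  have hD' : ∀ k, k ∈ D \ C ↔ k ∈ D ∧ ¬SameComp F i k := by simp [C]
  obtain ⟨x, hx0, hxD, hxrow, hxpos⟩ := ih (D \ C)
    (Finset.sdiff_ssubset (fun k hk => hD i hi k (Finset.mem_filter.1 hk).2)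
      ⟨i, Finset.mem_filter.2 ⟨Finset.mem_univ i, sameComp_refl F i⟩⟩)
    (fun j hj k hjk => (hD' k).2
      ⟨hD j ((hD' j).1 hj).1 k hjk, fun hik => ((hD' j).1 hj).2 (hik.trans hjk.symm)⟩)
    (fun j hj => (hsr j ((hD' j).1 hj).1).imp_right
      fun h => ⟨h.1, fun k hk => h.2 k ((hD' k).1 hk).1⟩)
  have hin : ∀ j ∈ D \ C, ∀ k, SameComp F i k → F j k = 0 := fun j hj k hk => by
    by_contra hjk
    have hji : Reach F j i := (Relation.ReflTransGen.single hjk).trans hk.2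
    exact ((hD' j).1 hj).2 ⟨hsrc j ((hD' j).1 hj).1 hji, hji⟩
  set c : {k // SameComp F i k} → ℝ := fun a => ∑ k : {k // ¬SameComp F i k}, F a k * x k
  have hc0 : 0 ≤ c := fun a => Finset.sum_nonneg fun k _ => mul_nonneg (hF _ _) (hx0 k)
  have hc : (∀ j ∈ D, Reach F i j → Reach F j i) → c = 0 := fun hfin =>
    funext fun a => Finset.sum_eq_zero fun k _ => by
      by_contra hne
      obtain ⟨hak, hxk⟩ := mul_ne_zero_iff.1 hne
      have hkD : k.1 ∈ D \ C := by_contra fun h => hxk (hxD k h)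
      exact k.2 ⟨a.2.1.tail hak, hfin k ((hD' k).1 hkD).1 (a.2.1.tail hak)⟩
  obtain ⟨w, hw0, hw, hwpos⟩ := exists_nonneg_compMatrix_mulVec_add_eq_smul hF hc0
    ((hsr i hi).imp_right fun h => ⟨h.1, hc h.2⟩)
  set y := Function.extend Subtype.val w x
  have hyC (a : {k // SameComp F i k}) : y a = w a := Subtype.val_injective.extend_apply w x a
  have hyC' (k : n) (hk : ¬SameComp F i k) : y k = x k := extend_subtype_val_apply_of_not w x hk
  refine ⟨y, fun k => ?_, fun k hk => ?_, fun j hj => ?_, fun k hk hkr => ?_⟩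
  · by_cases hk : SameComp F i k
    · exact (hyC ⟨k, hk⟩).symm ▸ hw0 _
    · exact (hyC' k hk).symm ▸ hx0 k
  · rw [hyC' k fun hik => hk (hD i hi k hik), hxD k fun h => hk ((hD' k).1 h).1]
  · by_cases hk : SameComp F i j
    · rw [mulVec_extend_apply_of_sameComp w x ⟨j, hk⟩, hyC ⟨j, hk⟩]
      exact congrFun hw ⟨j, hk⟩
    · have hjD' : j ∈ D \ C := (hD' j).2 ⟨hj, hk⟩
      rw [mulVec_extend_apply_of_forall_eq_zero w x (hin j hjD'), hxrow j hjD', hyC' j hk]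
  · by_cases hik : SameComp F i k
    · exact (hyC ⟨k, hik⟩).symm ▸ hwpos (by rwa [sr_compMatrix_eq hik]) _
    · exact (hyC' k hik).symm ▸ hxpos k ((hD' k).2 ⟨hk, hik⟩) hkr

theorem toReal_sr_compMatrix_le (hF : ∀ i j, 0 ≤ F i j) (i : n) :
    (sr (compMatrix F i)).toReal ≤ (sr F).toReal := by
  set T := Finset.univ.filter fun j => (sr (compMatrix F i)).toReal ≤ (sr (compMatrix F j)).toReal
  obtain ⟨m, hmT, hsrc⟩ := exists_mem_forall_reach_imp F (D := T) ⟨i, by simp [T]⟩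
  set r := (sr (compMatrix F m)).toReal
  have hir : (sr (compMatrix F i)).toReal ≤ r := (Finset.mem_filter.1 hmT).2
  set S := Finset.univ.filter fun j => Reach F j m
  have hS : ∀ j, j ∈ S ↔ Reach F j m := by simp [S]
  -- every class strictly upstream of the class of `m` has a smaller spectral radius
  obtain ⟨x, hx0, hxS, hxrow, hxpos⟩ := exists_nonneg_mulVec_eq_smul_on hF r S
    (fun j hj k hjk => (hS k).2 (hjk.2.trans ((hS j).1 hj)))
    (fun j hj => by
      by_cases hjm : SameComp F m j
      · exact .inr ⟨by rw [sr_compMatrix_eq hjm.symm], fun k hk _ => ((hS k).1 hk).trans hjm.1⟩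
      · refine .inl (lt_of_not_ge fun hle => hjm ⟨hsrc j ?_ ((hS j).1 hj), (hS j).1 hj⟩)
        exact Finset.mem_filter.2 ⟨Finset.mem_univ j, hir.trans hle⟩)
  have hrow : F *ᵥ x = r • x := funext fun j => by
    by_cases hj : j ∈ S
    · exact hxrow j hj
    · rw [Pi.smul_apply, smul_eq_mul, hxS j hj, mul_zero]
      refine Finset.sum_eq_zero fun k _ => ?_
      by_cases hjk : F j k = 0
      · simp [hjk]
      · rw [hxS k fun hk => hj ((hS j).2 (.head hjk ((hS k).1 hk))), mul_zero]
  have hx : x ≠ 0 := fun h =>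
    (hxpos m ((hS m).2 .refl) rfl).ne' (congrFun h m)
  calc (sr (compMatrix F i)).toReal ≤ |r| := hir.trans (le_abs_self r)
    _ ≤ (sr F).toReal :=
      abs_le_toReal_sr (mem_spectrum_iff_exists_mulVec_eq_smul.2 ⟨x, hx, hrow⟩)

theorem isBasic_iff_toReal_sr_eq (F : Matrix n n ℝ) (i : n) :
    IsBasic F i ↔ (sr (compMatrix F i)).toReal = (sr F).toReal :=
  (ENNReal.toReal_eq_toReal_iff' (sr_ne_top _) (sr_ne_top _)).symm

theorem exists_pos_mulVec_eq_smul_of_isBasic_iff_isFinal (hF : ∀ i j, 0 ≤ F i j)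
    (H : ∀ i, IsBasic F i ↔ IsFinal F i) :
    ∃ v : n → ℝ, (∀ i, 0 < v i) ∧ F *ᵥ v = (sr F).toReal • v := by
  obtain ⟨x, hx0, -, hxrow, hxpos⟩ := exists_nonneg_mulVec_eq_smul_on hF (sr F).toReal
    Finset.univ (fun _ _ k _ => Finset.mem_univ k) fun i _ => by
      by_cases hfin : IsFinal F i
      · exact .inr ⟨(isBasic_iff_toReal_sr_eq F i).1 ((H i).2 hfin), fun j _ => hfin j⟩
      · exact .inl <| (toReal_sr_compMatrix_le hF i).lt_of_ne
          fun h => hfin ((H i).1 ((isBasic_iff_toReal_sr_eq F i).2 h))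
  have hrow : F *ᵥ x = (sr F).toReal • x := funext fun j => hxrow j (Finset.mem_univ j)
  refine ⟨x, fun j => (hx0 j).lt_of_ne' fun hj => ?_, hrow⟩
  obtain ⟨k, hjk, hk⟩ := exists_reach_isFinal F j
  refine (hxpos k (Finset.mem_univ k) ((isBasic_iff_toReal_sr_eq F k).1 ((H k).2 hk))).ne' ?_
  exact eq_zero_of_reach hF hx0 (fun l hl => by simp [hrow, hl]) hjk hj

theorem isBasic_iff_isFinal_of_pos_mulVec_eq_smul (hF : ∀ i j, 0 ≤ F i j) {v : n → ℝ}
    (hv : ∀ i, 0 < v i) (hFv : F *ᵥ v = (sr F).toReal • v) (i : n) :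
    IsBasic F i ↔ IsFinal F i := by
  have : Nonempty {k // SameComp F i k} := ⟨⟨i, sameComp_refl F i⟩⟩
  have hB := compMatrix_nonneg hF i
  have hvC : ∀ a : {k // SameComp F i k}, 0 < (v ∘ Subtype.val) a := fun a => hv a
  have hsplit (a : {k // SameComp F i k}) :
      (compMatrix F i *ᵥ (v ∘ Subtype.val)) a + ∑ k : {k // ¬SameComp F i k}, F a k * v k =
        (sr F).toReal * v a := by
    rw [← mulVec_apply_eq_compMatrix_mulVec_add, hFv, Pi.smul_apply, smul_eq_mul]
  have hout (a : {k // SameComp F i k}) : 0 ≤ ∑ k : {k // ¬SameComp F i k}, F a k * v k :=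
    Finset.sum_nonneg fun k _ => mul_nonneg (hF _ _) (hv k).le
  rw [isBasic_iff_toReal_sr_eq]
  by_cases hfin : IsFinal F i
  · refine iff_of_true (toReal_sr_eq_of_mulVec_eq_smul hB hvC (funext fun a => ?_)) hfin
    rw [Pi.smul_apply, smul_eq_mul, Function.comp_apply, ← hsplit a, left_eq_add]
    refine Finset.sum_eq_zero fun k _ => ?_
    by_cases hak : F a k = 0
    · rw [hak, zero_mul]
    · exact absurd ⟨a.2.1.tail hak, hfin k (a.2.1.tail hak)⟩ k.2
  · refine iff_of_false (ne_of_lt ?_) hfin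
    obtain ⟨a, b, ha, hab, hb⟩ := exists_exit_of_not_isFinal hfin
    have hpos : 0 < ∑ k : {k // ¬SameComp F i k}, F a k * v k :=
      (mul_pos ((hF a b).lt_of_ne' hab) (hv b)).trans_le <| Finset.single_le_sum
        (f := fun k : {k // ¬SameComp F i k} => F a k * v k)
        (fun k _ => mul_nonneg (hF _ _) (hv k).le) (Finset.mem_univ ⟨b, hb⟩)
    refine (isIrreducible_compMatrix F i).toReal_sr_lt hB hvC (a := ⟨a, ha⟩) (fun c => ?_) ?_
    · have := hsplit c; have := hout c
      simp only [Pi.smul_apply, smul_eq_mul, Function.comp_apply]; linarith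
    · have := hsplit ⟨a, ha⟩
      simp only [Function.comp_apply]; linarith

end Construction

end Umbrella

/-- A non-negative square matrix has its basic components exactly
coinciding with its final components (it is an umbrella matrix) if and only if it
admits a positive right eigenvector for its spectral radius. -/
theorem umbrella_iff_positive_eigenvector {n : Type*} [Fintype n] [DecidableEq n]
    (F : Matrix n n ℝ) (hF : ∀ i j, 0 ≤ F i j) :
    (∀ i, Umbrella.IsBasic F i ↔ Umbrella.IsFinal F i) ↔
      ∃ v : n → ℝ, (∀ i, 0 < v i) ∧
        F.mulVec v = (Umbrella.sr F).toReal • v :=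
  ⟨Umbrella.exists_pos_mulVec_eq_smul_of_isBasic_iff_isFinal hF, fun ⟨_, hv, hFv⟩ =>
    Umbrella.isBasic_iff_isFinal_of_pos_mulVec_eq_smul hF hv hFv⟩
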